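/- Let SF = (A, R_a) be a finitary SETAF (each attacking set B with (B,a) ∈ R_a is finite) and Γ_SF = A ∪ { (⋀B) ↣ a : (B,a) ∈ R_a }. Then I is an equilibrium model of Γ_SF if and only if S_I := { a ∈ A : I ⊨ a } is a stable extension of SF (i.e., S_I = A \ Defeated(S_I) with Defeated(S) = { a : ∃ B ⊆ S, (B,a) ∈ R_a }) and I is the total HT-interpretation with V⁺ = A and V⁻ = Defeated(S_I); moreover this correspondence between equilibrium models and stable extensions is one-to-one. -/

import Mathlib

inductive Formula (Atom : Type) : Type
  | bot : Formula Atom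
  | atom : Atom → Formula Atom
  | sneg : Formula Atom → Formula Atom
  | conj : Formula Atom → Formula Atom → Formula Atom
  | disj : Formula Atom → Formula Atom → Formula Atom
  | impl : Formula Atom → Formula Atom → Formula Atom

structure NelsonInterp (Atom : Type) where
  W : Type
  le : W → W → Prop
  refl : ∀ w, le w w
  trans : ∀ {w₁ w₂ w₃}, le w₁ w₂ → le w₂ w₃ → le w₁ w₃
  Vp : W → Set Atom
  Vm : W → Set Atom
  monoP : ∀ {w w'}, le w w' → Vp w ⊆ Vp w'
  monoM : ∀ {w w'}, le w w' → Vm w ⊆ Vm w'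

mutual
  def forceP {Atom : Type} (I : NelsonInterp Atom) (w : I.W) : Formula Atom → Prop
    | .bot => False
    | .atom a => a ∈ I.Vp w
    | .sneg φ => forceM I w φ
    | .conj φ ψ => forceP I w φ ∧ forceP I w ψ
    | .disj φ ψ => forceP I w φ ∨ forceP I w ψ
    | .impl φ ψ => ∀ w', I.le w w' → (¬ forceP I w' φ ∨ forceP I w' ψ)
  def forceM {Atom : Type} (I : NelsonInterp Atom) (w : I.W) : Formula Atom → Prop
    | .bot => True
    | .atom a => a ∈ I.Vm w
    | .sneg φ => forceP I w φ
    | .conj φ ψ => forceM I w φ ∨ forceM I w ψ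
    | .disj φ ψ => forceM I w φ ∧ forceM I w ψ
    | .impl φ ψ => forceP I w φ ∧ forceM I w ψ
end

def Formula.neg {Atom : Type} (φ : Formula Atom) : Formula Atom := φ.impl .bot

def Formula.supImp {Atom : Type} (φ ψ : Formula Atom) : Formula Atom :=
  ((φ.sneg.neg).conj φ).impl ψ

def Formula.attack {Atom : Type} (φ ψ : Formula Atom) : Formula Atom :=
  φ.supImp ψ.sneg

/-- cw-inference at a world: `I,w ⊨ φ` iff `I,w ⊩⁺ ¬~φ ∧ φ`. -/
def cw {Atom : Type} (I : NelsonInterp Atom) (w : I.W) (φ : Formula Atom) : Prop :=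
  forceP I w ((φ.sneg.neg).conj φ)

/-- `I ⊩⁺ φ` : forcing at all worlds. -/
def forcedP {Atom : Type} (I : NelsonInterp Atom) (φ : Formula Atom) : Prop :=
  ∀ w, forceP I w φ

def forcedM {Atom : Type} (I : NelsonInterp Atom) (φ : Formula Atom) : Prop :=
  ∀ w, forceM I w φ

/-- `I ⊨ φ` : cw-inference at all worlds. -/
def cwAll {Atom : Type} (I : NelsonInterp Atom) (φ : Formula Atom) : Prop :=
  ∀ w, cw I w φ

def NelsonInterp.Consistent {Atom : Type} (I : NelsonInterp Atom) : Prop :=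
  ∀ w, I.Vp w ∩ I.Vm w = ∅

/-- An HT-interpretation: two worlds h ≤ t, given by four sets of atoms. -/
structure HTInterp (Atom : Type) where
  Hp : Set Atom
  Hm : Set Atom
  Tp : Set Atom
  Tm : Set Atom
  subP : Hp ⊆ Tp
  subM : Hm ⊆ Tm

/-- The underlying Nelson interpretation: world `false` is h, world `true` is t. -/
def HTInterp.toNelson {Atom : Type} (I : HTInterp Atom) : NelsonInterp Atom where
  W := Bool
  le := (· ≤ ·)
  refl := le_refl
  trans := le_trans
  Vp := fun w => if w then I.Tp else I.Hp
  Vm := fun w => if w then I.Tm else I.Hm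
  monoP := by
    intro w w' hle
    match w, w', hle with
    | false, false, _ => exact subset_rfl
    | false, true, _ => exact I.subP
    | true, true, _ => exact subset_rfl
    | true, false, h => exact absurd h (by decide)
  monoM := by
    intro w w' hle
    match w, w', hle with
    | false, false, _ => exact subset_rfl
    | false, true, _ => exact I.subM
    | true, true, _ => exact subset_rfl
    | true, false, h => exact absurd h (by decide)


def isHTModel {Atom : Type} (I : HTInterp Atom) (Γ : Set (Formula Atom)) : Prop :=
  ∀ φ ∈ Γ, ∀ w : Bool, forceP I.toNelson w φ

/-- The arguments consistently accepted by `I` among the arguments `A`. -/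
def SI {Atom : Type} (I : HTInterp Atom) (A : Set Atom) : Set Atom :=
  { a ∈ A | cwAll I.toNelson (Formula.atom a) }

/-- `I` is total and a ≤-minimal HT-model among models with the same `t`-valuations. -/
def Equilibrium {Atom : Type} (I : HTInterp Atom) (Γ : Set (Formula Atom)) : Prop :=
  I.Hp = I.Tp ∧ I.Hm = I.Tm ∧ isHTModel I Γ ∧
    ∀ J : HTInterp Atom, J.Tp = I.Tp → J.Tm = I.Tm → isHTModel J Γ →
      J.Hp = I.Tp ∧ J.Hm = I.Tm

/-- Finite conjunction of the atoms in `B` (empty conjunction is `~⊥`, i.e. `⊤`). -/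
noncomputable def bigConj {Atom : Type} (B : Finset Atom) : Formula Atom :=
  B.toList.foldr (fun a φ => (Formula.atom a).conj φ) Formula.bot.sneg

/-- Translation of the SETAF `(A, R_a)`. -/
def ThSF {Atom : Type} (A : Set Atom) (Ra : Finset Atom → Atom → Prop) :
    Set (Formula Atom) :=
  (Formula.atom '' A) ∪
    { f | ∃ B a, Ra B a ∧ f = (bigConj B).attack (Formula.atom a) }

def DefeatedSet {Atom : Type} (Ra : Finset Atom → Atom → Prop) (S : Set Atom) :
    Set Atom :=
  { a | ∃ B : Finset Atom, ↑B ⊆ S ∧ Ra B a }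

/-!
In every model of `Γ_SF` both worlds accept all of `A`, and the attack `(B, a)` forces `~a` at a
world exactly where every member of `B` is consistently accepted. So, below a fixed world
`t = (T⁺, T⁻)`, the least model puts `h = (A, Defeated(A \ T⁻))`; equilibrium therefore means
`T⁺ = A` and `T⁻ = Defeated(A \ T⁻)`, and as the consistently accepted arguments are then
`A \ T⁻`, this is the stable-extension condition.
-/

section Nelson

variable {Atom : Type} (N : NelsonInterp Atom) (w : N.W)

theorem cw_iff (φ : Formula Atom) :
    cw N w φ ↔ (∀ w', N.le w w' → ¬forceM N w' φ) ∧ forceP N w φ := by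
  simp [cw, Formula.neg, forceP]

theorem forceP_bigConj (B : Finset Atom) : forceP N w (bigConj B) ↔ ∀ b ∈ B, b ∈ N.Vp w := by
  simp_rw [bigConj, ← Finset.mem_toList]
  induction B.toList with
  | nil => simp [forceP, forceM]
  | cons a l ih => simp [forceP, ih]

theorem forceM_bigConj (B : Finset Atom) : forceM N w (bigConj B) ↔ ∃ b ∈ B, b ∈ N.Vm w := by
  simp_rw [bigConj, ← Finset.mem_toList]
  induction B.toList with
  | nil => simp [forceM, forceP]
  | cons a l ih => simp [forceM, ih]

theorem forcedP_attack (φ ψ : Formula Atom) :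
    forcedP N (φ.attack ψ) ↔ ∀ w, cw N w φ → forceM N w ψ := by
  simp only [forcedP, Formula.attack, Formula.supImp, forceP, ← imp_iff_not_or]
  exact ⟨fun h w => h w w (N.refl w), fun h _ w' _ => h w'⟩

end Nelson

namespace HTInterp

variable {Atom : Type} (I : HTInterp Atom)

theorem forall_le_notMem_Vm_iff (w : Bool) (a : Atom) :
    (∀ w', I.toNelson.le w w' → a ∉ I.toNelson.Vm w') ↔ a ∉ I.Tm :=
  ⟨fun h => h true (Bool.le_true w),
    fun h w' _ ha => h (I.toNelson.monoM (Bool.le_true w') ha)⟩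

theorem cw_atom_iff (w : Bool) (a : Atom) :
    cw I.toNelson w (.atom a) ↔ a ∈ I.toNelson.Vp w \ I.Tm :=
  (cw_iff I.toNelson w _).trans <| and_comm.trans <|
    and_congr_right' (I.forall_le_notMem_Vm_iff w a)

theorem cw_bigConj_iff (w : Bool) (B : Finset Atom) :
    cw I.toNelson w (bigConj B) ↔ ↑B ⊆ I.toNelson.Vp w \ I.Tm := by
  refine (cw_iff I.toNelson w _).trans ⟨?_, ?_⟩
  · rintro ⟨hM, hP⟩ b hb
    refine ⟨(forceP_bigConj _ _ B).1 hP b hb, fun hbT => ?_⟩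
    exact hM true (Bool.le_true w) ((forceM_bigConj _ _ B).2 ⟨b, hb, hbT⟩)
  · intro hB
    refine ⟨fun w' _ hM => ?_, (forceP_bigConj _ _ B).2 fun b hb => (hB hb).1⟩
    obtain ⟨b, hb, hbM⟩ := (forceM_bigConj _ _ B).1 hM
    exact (hB hb).2 (I.toNelson.monoM (Bool.le_true w') hbM)

theorem cwAll_atom_iff (a : Atom) : cwAll I.toNelson (.atom a) ↔ a ∈ I.Hp \ I.Tm :=
  ⟨fun h => (I.cw_atom_iff false a).1 (h false),
    fun h w => (I.cw_atom_iff w a).2 ⟨I.toNelson.monoP (Bool.false_le w) h.1, h.2⟩⟩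

theorem forcedP_atom_iff (a : Atom) : forcedP I.toNelson (.atom a) ↔ a ∈ I.Hp :=
  ⟨fun h => h false, fun h w => I.toNelson.monoP (Bool.false_le w) h⟩

end HTInterp

section SETAF

variable {Atom : Type} {Ra : Finset Atom → Atom → Prop}

theorem defeatedSet_mono {S T : Set Atom} (h : S ⊆ T) : DefeatedSet Ra S ⊆ DefeatedSet Ra T :=
  fun _ ⟨B, hBS, hRa⟩ => ⟨B, hBS.trans h, hRa⟩

theorem defeatedSet_subset_iff {S X : Set Atom} :
    DefeatedSet Ra S ⊆ X ↔ ∀ B a, Ra B a → ↑B ⊆ S → a ∈ X :=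
  ⟨fun h B _ hRa hBS => h ⟨B, hBS, hRa⟩, fun h _ ⟨B, hBS, hRa⟩ => h B _ hRa hBS⟩

theorem forcedP_attack_bigConj_atom_iff (I : HTInterp Atom) (B : Finset Atom) (a : Atom) :
    forcedP I.toNelson ((bigConj B).attack (.atom a)) ↔
      (↑B ⊆ I.Hp \ I.Tm → a ∈ I.Hm) ∧ (↑B ⊆ I.Tp \ I.Tm → a ∈ I.Tm) := by
  rw [forcedP_attack]
  refine ⟨fun h => ⟨fun hB => h false ?_, fun hB => h true ?_⟩, fun h w hB => ?_⟩
  · exact (I.cw_bigConj_iff false B).2 hB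
  · exact (I.cw_bigConj_iff true B).2 hB
  · cases w
    · exact h.1 ((I.cw_bigConj_iff false B).1 hB)
    · exact h.2 ((I.cw_bigConj_iff true B).1 hB)

theorem isHTModel_thSF_iff (A : Set Atom) (I : HTInterp Atom) :
    isHTModel I (ThSF A Ra) ↔ A ⊆ I.Hp ∧
      DefeatedSet Ra (I.Hp \ I.Tm) ⊆ I.Hm ∧ DefeatedSet Ra (I.Tp \ I.Tm) ⊆ I.Tm := by
  have hThSF : isHTModel I (ThSF A Ra) ↔ (∀ a ∈ A, forcedP I.toNelson (.atom a)) ∧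
      ∀ B a, Ra B a → forcedP I.toNelson ((bigConj B).attack (.atom a)) := by
    simp only [isHTModel, ThSF, Set.mem_union, or_imp, forall_and, Set.forall_mem_image]
    refine and_congr_right' ⟨fun h B a hRa => h _ ⟨B, a, hRa, rfl⟩, ?_⟩
    rintro h _ ⟨B, a, hRa, rfl⟩
    exact h B a hRa
  simp only [hThSF, HTInterp.forcedP_atom_iff, forcedP_attack_bigConj_atom_iff,
    defeatedSet_subset_iff, imp_and, forall_and]
  rfl

theorem equilibrium_thSF_iff (A : Set Atom) (I : HTInterp Atom) :
    Equilibrium I (ThSF A Ra) ↔ I.Hp = A ∧ I.Tp = A ∧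
      I.Hm = DefeatedSet Ra (A \ I.Tm) ∧ I.Tm = DefeatedSet Ra (A \ I.Tm) := by
  constructor
  · rintro ⟨hHT, hHM, hI, hmin⟩
    obtain ⟨hA, -, hDT⟩ := (isHTModel_thSF_iff A I).1 hI
    have hAT : A ⊆ I.Tp := hA.trans I.subP
    let J : HTInterp Atom :=
      ⟨A, DefeatedSet Ra (A \ I.Tm), I.Tp, I.Tm, hAT,
        (defeatedSet_mono (Set.sdiff_subset_sdiff_left hAT)).trans hDT⟩
    have hJ : isHTModel J (ThSF A Ra) := (isHTModel_thSF_iff A J).2 ⟨subset_rfl, subset_rfl, hDT⟩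
    obtain ⟨hJp, hJm⟩ := hmin J rfl rfl hJ
    exact ⟨hHT.trans hJp.symm, hJp.symm, hHM.trans hJm.symm, hJm.symm⟩
  · rintro ⟨hHp, hTp, hHm, hTm⟩
    have hI : isHTModel I (ThSF A Ra) := by
      refine (isHTModel_thSF_iff A I).2 ⟨hHp.ge, ?_, ?_⟩
      · rw [hHp, hHm]
      · rw [hTp]
        exact hTm.ge
    refine ⟨hHp.trans hTp.symm, hHm.trans hTm.symm, hI, fun J hJp hJm hJ => ?_⟩
    obtain ⟨hJA, hJD, -⟩ := (isHTModel_thSF_iff A J).1 hJ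
    rw [hTp] at hJp ⊢
    have hJHp : J.Hp = A := (J.subP.trans hJp.le).antisymm hJA
    refine ⟨hJHp, (J.subM.trans hJm.le).antisymm ?_⟩
    calc I.Tm = DefeatedSet Ra (A \ I.Tm) := hTm
      _ = DefeatedSet Ra (J.Hp \ J.Tm) := by rw [hJHp, hJm]
      _ ⊆ J.Hm := hJD

end SETAF

theorem SI_eq_diff {Atom : Type} {I : HTInterp Atom} {A : Set Atom} (hA : A ⊆ I.Hp) :
    SI I A = A \ I.Tm := by
  ext a
  simp only [SI, Set.mem_ofPred_eq, HTInterp.cwAll_atom_iff, Set.mem_sdiff]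
  exact ⟨fun h => ⟨h.1, h.2.2⟩, fun h => ⟨h.1, hA h.1, h.2⟩⟩

theorem setaf_equilibrium_iff_stable {Atom : Type} (A : Set Atom)
    (Ra : Finset Atom → Atom → Prop)
    (hR : ∀ B a, Ra B a → ↑B ⊆ A ∧ a ∈ A) (I : HTInterp Atom) :
    Equilibrium I (ThSF A Ra) ↔
      (SI I A = A \ DefeatedSet Ra (SI I A) ∧
       I.Hp = A ∧ I.Tp = A ∧
       I.Hm = DefeatedSet Ra (SI I A) ∧ I.Tm = DefeatedSet Ra (SI I A)) := by
  rw [equilibrium_thSF_iff]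
  constructor
  · rintro ⟨hHp, hTp, hHm, hTm⟩
    rw [SI_eq_diff hHp.ge, ← hTm]
    exact ⟨rfl, hHp, hTp, hHm.trans hTm.symm, rfl⟩
  · rintro ⟨-, hHp, hTp, hHm, hTm⟩
    rw [SI_eq_diff hHp.ge] at hHm hTm
    exact ⟨hHp, hTp, hHm, hTm⟩
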